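/- arXiv:1910.03117 — 5 statements merged into one kernel-verified Lean document; each statement's English description precedes it below -/
import Mathlib

section
/- Suppose there is e̲ ∈ ℝ with f_ε = 0 on (−∞, e̲), f_ε > 0 on (e̲, ē), and f_ε = 0 on (ē, ∞), where ē ∈ (e̲, ∞]. Let z1 < z2 be such that both posteriors F(·|z1) and F(·|z2) are defined, and suppose μ( (max(z1 − e̲, z2 − ē), z2 − e̲) ) > 0. Then F(z1 − e̲ | z1) = 1 > F(z1 − e̲ | z2). In particular it is NOT the case that F(w|z1) ≤ F(w|z2) for all w, i.e., the posterior given the lower signal z1 does not (even weakly) first-order stochastically dominate the posterior given the higher signal z2. -/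
open MeasureTheory Set

/-- The posterior cdf of `X` given the signal realization `Z = z`, where the
prior of `X` is `μ` and the independent noise `ε = Z − X` has Lebesgue
density `fε`. -/
noncomputable def postCdf (μ : Measure ℝ) (fε : ℝ → ℝ) (w z : ℝ) : ℝ :=
  (∫ x in Iic w, fε (z - x) ∂μ) / (∫ x, fε (z - x) ∂μ)

/-- Suppose the noise density `fε` vanishes below `e̲ ∈ ℝ`, is
positive on `(e̲, ē)` and vanishes above `ē ∈ (e̲, ∞]`. If `z1 < z2` are
signals at which the posteriors are defined and
`μ((max(z1 − e̲, z2 − ē), z2 − e̲)) > 0`, then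
`F(z1 − e̲ | z1) = 1 > F(z1 − e̲ | z2)`; in particular the posterior given the
lower signal `z1` does not even weakly FOSD the posterior given `z2`. -/
theorem stmt_8 (μ : Measure ℝ) [IsProbabilityMeasure μ]
    (fε : ℝ → ℝ) (hmeas : Measurable fε) (hnn : ∀ e, 0 ≤ fε e)
    (hdens : (∫ e, fε e) = 1)
    (elow : ℝ) (ebar : EReal) (hee : (elow : EReal) < ebar)
    (h0below : ∀ e : ℝ, e < elow → fε e = 0)
    (hpos : ∀ e : ℝ, elow < e → (e : EReal) < ebar → 0 < fε e)
    (h0above : ∀ e : ℝ, ebar < (e : EReal) → fε e = 0)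
    (z1 z2 : ℝ) (hz : z1 < z2)
    (hint1 : Integrable (fun x => fε (z1 - x)) μ)
    (hint2 : Integrable (fun x => fε (z2 - x)) μ)
    (hden1 : 0 < ∫ x, fε (z1 - x) ∂μ)
    (hden2 : 0 < ∫ x, fε (z2 - x) ∂μ)
    (hμpos : 0 < μ {x : ℝ |
      max ((z1 - elow : ℝ) : EReal) ((z2 : EReal) - ebar) < (x : EReal) ∧
      x < z2 - elow}) :
    postCdf μ fε (z1 - elow) z1 = 1 ∧
    postCdf μ fε (z1 - elow) z2 < 1 ∧
    ¬ (∀ w : ℝ, postCdf μ fε w z1 ≤ postCdf μ fε w z2) := by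
  set w := z1 - elow with hw
  -- Part 1
  have h1 : postCdf μ fε w z1 = 1 := by
    have hnum1 : (∫ x in Iic w, fε (z1 - x) ∂μ) = ∫ x, fε (z1 - x) ∂μ := by
      apply setIntegral_eq_integral_of_forall_compl_eq_zero
      intro x hx
      apply h0below
      simp only [mem_Iic, not_le] at hx
      linarith
    rw [postCdf, hnum1, div_self hden1.ne']
  -- Part 2
  have hS : {x : ℝ |
      max ((z1 - elow : ℝ) : EReal) ((z2 : EReal) - ebar) < (x : EReal) ∧
      x < z2 - elow} ⊆ Function.support (fun x => fε (z2 - x)) ∩ Ioi w := by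
    rintro x ⟨hx1, hx2⟩
    have hxw : w < x := by
      have := lt_of_le_of_lt (le_max_left _ _) hx1
      exact_mod_cast this
    have hlow : elow < z2 - x := by linarith
    have hup : ((z2 - x : ℝ) : EReal) < ebar := by
      rcases eq_or_ne ebar ⊤ with rfl | htop
      · exact EReal.coe_lt_top _
      · have hbot : ebar ≠ ⊥ := fun h => by simp [h] at hee
        lift ebar to ℝ using ⟨htop, hbot⟩ with b
        have hx1' := lt_of_le_of_lt (le_max_right ((z1 - elow : ℝ) : EReal) _) hx1
        have : z2 - b < x := by
          have h2 : ((z2 - b : ℝ) : EReal) < (x : EReal) := by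
            rw [EReal.coe_sub]; exact hx1'
          exact_mod_cast h2
        exact_mod_cast (by linarith : z2 - x < b)
    refine ⟨?_, hxw⟩
    simp only [Function.mem_support]
    exact (hpos _ hlow hup).ne'
  have htail : 0 < ∫ x in Ioi w, fε (z2 - x) ∂μ := by
    rw [setIntegral_pos_iff_support_of_nonneg_ae]
    · exact lt_of_lt_of_le hμpos (measure_mono hS)
    · exact Filter.Eventually.of_forall fun x => hnn _
    · exact hint2.integrableOn
  have hsplit : (∫ x in Iic w, fε (z2 - x) ∂μ) + (∫ x in Ioi w, fε (z2 - x) ∂μ)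
      = ∫ x, fε (z2 - x) ∂μ := by
    have := integral_add_compl (measurableSet_Iic (a := w)) hint2
    rwa [compl_Iic] at this
  have h2 : postCdf μ fε w z2 < 1 := by
    rw [postCdf, div_lt_one hden2]
    linarith
  exact ⟨h1, h2, fun h => absurd (h w) (by rw [h1]; exact not_le.2 h2)⟩
end

section
/- Suppose there is ē ∈ ℝ with f_ε = 0 on (ē, ∞), f_ε > 0 on (e̲, ē), and f_ε = 0 on (−∞, e̲), where e̲ ∈ [−∞, ē). Let z1 < z2 be such that both posteriors F(·|z1) and F(·|z2) are defined, and suppose μ( (z1 − ē, min(z2 − ē, z1 − e̲)) ) > 0. Then there exists w < z2 − ē with F(w|z1) > 0 = F(w|z2). In particular it is NOT the case that F(w|z1) ≤ F(w|z2) for all w, i.e., the posterior given the lower signal z1 does not (even weakly) first-order stochastically dominate the posterior given the higher signal z2. -/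
open MeasureTheory Set

lemma EReal.lt_coe_sub_of_coe_lt_sub {x z : ℝ} {e : EReal} (h : (x : EReal) < z - e) :
    e < ((z - x : ℝ) : EReal) := by
  rw [EReal.lt_sub_iff_add_lt (.inr (EReal.coe_ne_top x)) (.inr (EReal.coe_ne_bot x))] at h
  rw [EReal.coe_sub, EReal.lt_sub_iff_add_lt (.inl (EReal.coe_ne_bot x))
    (.inl (EReal.coe_ne_top x)), add_comm]
  exact h

lemma exists_lt_measure_inter_Iic_pos {μ : Measure ℝ} {S : Set ℝ} {a : ℝ}
    (hSa : ∀ x ∈ S, x < a) (hμS : 0 < μ S) : ∃ w < a, 0 < μ (S ∩ Iic w) := by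
  by_contra! hnull
  have hcover : S ⊆ ⋃ q : {q : ℚ // (q : ℝ) < a}, S ∩ Iic (q : ℝ) := by
    intro x hx
    obtain ⟨q, hxq, hqa⟩ := exists_rat_btwn (hSa x hx)
    exact mem_iUnion.2 ⟨⟨q, hqa⟩, hx, hxq.le⟩
  exact hμS.ne' <|
    measure_mono_null hcover (measure_iUnion_null fun q => nonpos_iff_eq_zero.1 (hnull _ q.2))

lemma postCdf_eq_zero_of_forall_le {μ : Measure ℝ} {fε : ℝ → ℝ} {w z : ℝ}
    (h : ∀ x ≤ w, fε (z - x) = 0) : postCdf μ fε w z = 0 := by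
  rw [postCdf, setIntegral_eq_zero_of_forall_eq_zero (t := Iic w) fun x hx => h x hx, zero_div]

lemma postCdf_pos_of_measure_pos {μ : Measure ℝ} {fε : ℝ → ℝ} {w z : ℝ} {S : Set ℝ}
    (hnn : ∀ e, 0 ≤ fε e) (hint : Integrable (fun x => fε (z - x)) μ)
    (hden : 0 < ∫ x, fε (z - x) ∂μ) (hSpos : ∀ x ∈ S, 0 < fε (z - x))
    (hμS : 0 < μ (S ∩ Iic w)) : 0 < postCdf μ fε w z := by
  have hnum : 0 < ∫ x in Iic w, fε (z - x) ∂μ := by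
    rw [setIntegral_pos_iff_support_of_nonneg_ae (.of_forall fun x => hnn _) hint.integrableOn]
    exact hμS.trans_le (measure_mono fun x hx => ⟨(hSpos x hx.1).ne', hx.2⟩)
  exact div_pos hnum hden

theorem stmt_9_general (μ : Measure ℝ)
    (fε : ℝ → ℝ) (hnn : ∀ e, 0 ≤ fε e)
    (ebar : ℝ) (elow : EReal)
    (h0above : ∀ e : ℝ, ebar < e → fε e = 0)
    (hpos : ∀ e : ℝ, elow < (e : EReal) → e < ebar → 0 < fε e)
    (z1 z2 : ℝ)
    (hint1 : Integrable (fun x => fε (z1 - x)) μ)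
    (hden1 : 0 < ∫ x, fε (z1 - x) ∂μ)
    (hμpos : 0 < μ {x : ℝ | z1 - ebar < x ∧
      (x : EReal) < min ((z2 - ebar : ℝ) : EReal) ((z1 : EReal) - elow)}) :
    (∃ w : ℝ, w < z2 - ebar ∧ postCdf μ fε w z2 = 0 ∧ 0 < postCdf μ fε w z1) ∧
    ¬ (∀ w : ℝ, postCdf μ fε w z1 ≤ postCdf μ fε w z2) := by
  obtain ⟨w, hw, hμw⟩ := exists_lt_measure_inter_Iic_pos
    (fun x hx => EReal.coe_lt_coe_iff.1 (hx.2.trans_le (min_le_left _ _))) hμpos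
  have hF2 : postCdf μ fε w z2 = 0 :=
    postCdf_eq_zero_of_forall_le fun x hx => h0above _ (by linarith)
  have hF1 : 0 < postCdf μ fε w z1 :=
    postCdf_pos_of_measure_pos hnn hint1 hden1
      (fun x hx => hpos _ (EReal.lt_coe_sub_of_coe_lt_sub (hx.2.trans_le (min_le_right _ _)))
        (by linarith [hx.1])) hμw
  exact ⟨⟨w, hw, hF2, hF1⟩, fun hall => (hall w).not_gt (hF2 ▸ hF1)⟩

/-- Suppose the noise density `fε` vanishes above `ē ∈ ℝ`, is
positive on `(e̲, ē)` and vanishes below `e̲ ∈ [−∞, ē)`. If `z1 < z2` are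
signals at which the posteriors are defined and
`μ((z1 − ē, min(z2 − ē, z1 − e̲))) > 0`, then there exists `w < z2 − ē` with
`F(w|z1) > 0 = F(w|z2)`; in particular the posterior given the lower signal
`z1` does not even weakly FOSD the posterior given `z2`. -/
theorem stmt_9 (μ : Measure ℝ) [IsProbabilityMeasure μ]
    (fε : ℝ → ℝ) (hmeas : Measurable fε) (hnn : ∀ e, 0 ≤ fε e)
    (hdens : (∫ e, fε e) = 1)
    (ebar : ℝ) (elow : EReal) (hee : elow < (ebar : EReal))
    (h0above : ∀ e : ℝ, ebar < e → fε e = 0)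
    (hpos : ∀ e : ℝ, elow < (e : EReal) → e < ebar → 0 < fε e)
    (h0below : ∀ e : ℝ, (e : EReal) < elow → fε e = 0)
    (z1 z2 : ℝ) (hz : z1 < z2)
    (hint1 : Integrable (fun x => fε (z1 - x)) μ)
    (hint2 : Integrable (fun x => fε (z2 - x)) μ)
    (hden1 : 0 < ∫ x, fε (z1 - x) ∂μ)
    (hden2 : 0 < ∫ x, fε (z2 - x) ∂μ)
    (hμpos : 0 < μ {x : ℝ | z1 - ebar < x ∧
      (x : EReal) < min ((z2 - ebar : ℝ) : EReal) ((z1 : EReal) - elow)}) :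
    (∃ w : ℝ, w < z2 - ebar ∧ postCdf μ fε w z2 = 0 ∧ 0 < postCdf μ fε w z1) ∧
    ¬ (∀ w : ℝ, postCdf μ fε w z1 ≤ postCdf μ fε w z2) :=
  stmt_9_general μ fε hnn ebar elow h0above hpos z1 z2 hint1 hden1 hμpos
end

section
/- Suppose the support of μ is an interval [x̲, x̄] with −∞ ≤ x̲ < x̄ ≤ ∞ (i.e., μ(ℝ ∖ [x̲, x̄]) = 0 and μ(I) > 0 for every open interval I meeting (x̲, x̄)), and suppose f_ε > 0 on (e̲, ē) and f_ε = 0 outside [e̲, ē], where −∞ < e̲ < ē < ∞ and ē − e̲ ≤ x̄ − x̲. Then for all z1 < z2 at which both posteriors are defined, there exists w with F(w|z1) > F(w|z2): the posterior given the lower signal never (even weakly) first-order stochastically dominates the posterior given the higher signal. -/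
/-!
The posterior given `z` lives on `[max x̲ (z - ē), min x̄ (z - e̲)]` and charges every
nondegenerate subinterval, because there both the prior and the shifted noise density are
positive. If `x̲ < z₂ - ē`, any `w` with `max x̲ (z₁ - ē) < w < z₂ - ē` has `F(w|z₂) = 0 < F(w|z₁)`.
Otherwise `x̲` is finite and `z₂ - ē ≤ x̲`, so at `w = z₁ - e̲` we have `F(w|z₁) = 1`, while
the width condition `ē - e̲ ≤ x̄ - x̲` forces `w < min x̄ (z₂ - e̲)`, so that the posterior given
`z₂` charges `(w, ∞)` and `F(w|z₂) < 1`.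
-/

open MeasureTheory Set

lemma EReal.coe_add_le_of_le_of_le_sub {a d : ℝ} {x y : EReal} (ha : (a : EReal) ≤ x)
    (hd : (d : EReal) ≤ y - x) : ((a + d : ℝ) : EReal) ≤ y := by
  induction x using EReal.rec with
  | bot => simp at ha
  | top => induction y using EReal.rec <;> simp at hd ⊢
  | coe x =>
    rw [EReal.le_sub_iff_add_le (.inl (EReal.coe_ne_bot x)) (.inl (EReal.coe_ne_top x))] at hd
    calc ((a + d : ℝ) : EReal) = (d : EReal) + a := by rw [add_comm]; rfl
      _ ≤ d + x := by gcongr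
      _ ≤ y := hd

lemma setIntegral_pos_of_subset {X : Type*} [MeasurableSpace X] {μ : Measure X} {g : X → ℝ}
    {s t : Set X} (hg : ∀ x, 0 ≤ g x) (hint : Integrable g μ) (hts : t ⊆ s) (ht : 0 < μ t)
    (hpos : ∀ x ∈ t, 0 < g x) : 0 < ∫ x in s, g x ∂μ := by
  rw [setIntegral_pos_iff_support_of_nonneg_ae (ae_of_all _ hg) hint.integrableOn]
  exact ht.trans_le (measure_mono fun x hx => ⟨(hpos x hx).ne', hts hx⟩)

section Posterior

variable {μ : Measure ℝ} {fε : ℝ → ℝ} {elow ebar : ℝ} {xlow xbar : EReal}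

lemma postCdf_eq_zero_of_lt_sub (h0 : ∀ e ∉ Icc elow ebar, fε e = 0) {w z : ℝ}
    (hw : w < z - ebar) : postCdf μ fε w z = 0 := by
  rw [postCdf, setIntegral_eq_zero_of_forall_eq_zero fun x hx =>
    h0 _ fun he => by linarith [he.2, mem_Iic.1 hx], zero_div]

lemma postCdf_eq_one_of_sub_le (h0 : ∀ e ∉ Icc elow ebar, fε e = 0) {w z : ℝ}
    (hZ : ∫ x, fε (z - x) ∂μ ≠ 0) (hw : z - elow ≤ w) : postCdf μ fε w z = 1 := by
  rw [postCdf, setIntegral_eq_integral_of_forall_compl_eq_zero fun x hx =>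
    h0 _ fun he => hx (mem_Iic.2 (by linarith [he.1])), div_self hZ]

lemma postCdf_lt_one_of_setIntegral_Ioi_pos {w z : ℝ}
    (hint : Integrable (fun x => fε (z - x)) μ) (hZ : 0 < ∫ x, fε (z - x) ∂μ)
    (hw : 0 < ∫ x in Ioi w, fε (z - x) ∂μ) : postCdf μ fε w z < 1 := by
  have hsplit := integral_add_compl (measurableSet_Iic (a := w)) hint
  rw [compl_Iic] at hsplit
  rw [postCdf, div_lt_one hZ]
  linarith

lemma exists_mem_support_of_integral_pos (h0 : ∀ e ∉ Icc elow ebar, fε e = 0)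
    (hμout : μ {x : ℝ | (x : EReal) < xlow ∨ xbar < (x : EReal)} = 0) {z : ℝ}
    (hZ : 0 < ∫ x, fε (z - x) ∂μ) :
    ∃ x : ℝ, z - x ∈ Icc elow ebar ∧ xlow ≤ (x : EReal) ∧ (x : EReal) ≤ xbar := by
  by_contra! hnone
  refine hZ.ne' (integral_eq_zero_of_ae
    (measure_mono_null (fun x (hx : fε (z - x) ≠ 0) => ?_) hμout))
  by_contra hin
  simp only [mem_ofPred_eq, not_or, not_lt] at hin
  exact hx (h0 _ fun he => (hnone x he hin.1).not_ge hin.2)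

lemma measure_Ioo_pos_of_le
    (hμin : ∀ a b : ℝ, a < b →
      (∃ t : ℝ, a < t ∧ t < b ∧ xlow < (t : EReal) ∧ (t : EReal) < xbar) →
      0 < μ (Ioo a b))
    {a b : ℝ} (hab : a < b) (ha : xlow ≤ a) (hb : (b : EReal) ≤ xbar) : 0 < μ (Ioo a b) := by
  refine hμin a b hab ⟨(a + b) / 2, by linarith, by linarith, ha.trans_lt ?_, lt_of_lt_of_le ?_ hb⟩
  all_goals exact_mod_cast (by linarith)

lemma postCdf_pos (hnn : ∀ e, 0 ≤ fε e) (hpos : ∀ e ∈ Ioo elow ebar, 0 < fε e)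
    (h0 : ∀ e ∉ Icc elow ebar, fε e = 0)
    (hμin : ∀ a b : ℝ, a < b →
      (∃ t : ℝ, a < t ∧ t < b ∧ xlow < (t : EReal) ∧ (t : EReal) < xbar) →
      0 < μ (Ioo a b))
    {w z : ℝ} (hint : Integrable (fun x => fε (z - x)) μ) (hZ : 0 < ∫ x, fε (z - x) ∂μ)
    (hxw : xlow < w) (hzw : z - ebar < w) (hwx : (w : EReal) ≤ xbar) :
    0 < postCdf μ fε w z := by
  rcases le_or_gt (z - elow) w with hw | hw
  · rw [postCdf_eq_one_of_sub_le h0 hZ.ne' hw]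
    exact one_pos
  obtain ⟨c, hc, hcw⟩ := EReal.lt_iff_exists_real_btwn.1
    (max_lt hxw (by exact_mod_cast hzw : ((z - ebar : ℝ) : EReal) < w))
  rw [max_lt_iff] at hc
  have hcw' : c < w := by exact_mod_cast hcw
  have hzc : z - ebar < c := by exact_mod_cast hc.2
  refine div_pos (setIntegral_pos_of_subset (fun x => hnn _) hint
    (Ioo_subset_Iio_self.trans Iio_subset_Iic_self) (measure_Ioo_pos_of_le hμin hcw' hc.1.le hwx)
    fun x hx => hpos _ ⟨?_, ?_⟩) hZ
  all_goals linarith [hx.1, hx.2]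

lemma postCdf_lt_one (hnn : ∀ e, 0 ≤ fε e) (hpos : ∀ e ∈ Ioo elow ebar, 0 < fε e)
    (h0 : ∀ e ∉ Icc elow ebar, fε e = 0)
    (hμin : ∀ a b : ℝ, a < b →
      (∃ t : ℝ, a < t ∧ t < b ∧ xlow < (t : EReal) ∧ (t : EReal) < xbar) →
      0 < μ (Ioo a b))
    {w z : ℝ} (hint : Integrable (fun x => fε (z - x)) μ) (hZ : 0 < ∫ x, fε (z - x) ∂μ)
    (hxw : xlow ≤ w) (hwz : w < z - elow) (hwx : (w : EReal) < xbar) :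
    postCdf μ fε w z < 1 := by
  rcases lt_or_ge w (z - ebar) with hw | hw
  · rw [postCdf_eq_zero_of_lt_sub h0 hw]
    exact one_pos
  obtain ⟨c, hwc, hc⟩ := EReal.lt_iff_exists_real_btwn.1
    (lt_min hwx (by exact_mod_cast hwz : (w : EReal) < ((z - elow : ℝ) : EReal)))
  rw [lt_min_iff] at hc
  have hwc' : w < c := by exact_mod_cast hwc
  have hcz : c < z - elow := by exact_mod_cast hc.2
  refine postCdf_lt_one_of_setIntegral_Ioi_pos hint hZ (setIntegral_pos_of_subset
    (fun x => hnn _) hint Ioo_subset_Ioi_self (measure_Ioo_pos_of_le hμin hwc' hxw hc.1.le)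
    fun x hx => hpos _ ⟨?_, ?_⟩)
  all_goals linarith [hx.1, hx.2]

end Posterior

theorem stmt_10_general (μ : Measure ℝ)
    (fε : ℝ → ℝ) (hnn : ∀ e, 0 ≤ fε e)
    (xlow xbar : EReal)
    (hμout : μ {x : ℝ | (x : EReal) < xlow ∨ xbar < (x : EReal)} = 0)
    (hμin : ∀ a b : ℝ, a < b →
      (∃ t : ℝ, a < t ∧ t < b ∧ xlow < (t : EReal) ∧ (t : EReal) < xbar) →
      0 < μ (Ioo a b))
    (elow ebar : ℝ)
    (hpos : ∀ e ∈ Ioo elow ebar, 0 < fε e)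
    (h0 : ∀ e ∉ Icc elow ebar, fε e = 0)
    (hwidth : ((ebar - elow : ℝ) : EReal) ≤ xbar - xlow) :
    ∀ z1 z2 : ℝ, z1 < z2 →
      Integrable (fun x => fε (z1 - x)) μ → 0 < (∫ x, fε (z1 - x) ∂μ) →
      Integrable (fun x => fε (z2 - x)) μ → 0 < (∫ x, fε (z2 - x) ∂μ) →
      ∃ w : ℝ, postCdf μ fε w z2 < postCdf μ fε w z1 := by
  intro z1 z2 hz h1i h1p h2i h2p
  obtain ⟨x1, hx1, hxlow1, -⟩ := exists_mem_support_of_integral_pos h0 hμout h1p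
  obtain ⟨x2, hx2, -, hxbar2⟩ := exists_mem_support_of_integral_pos h0 hμout h2p
  by_cases hA : xlow < ((z2 - ebar : ℝ) : EReal)
  · obtain ⟨w, hw1, hw2⟩ := EReal.lt_iff_exists_real_btwn.1
      (max_lt hA (by exact_mod_cast (by linarith) : ((z1 - ebar : ℝ) : EReal) < (z2 - ebar : ℝ)))
    rw [max_lt_iff] at hw1
    have hw2' : w < z2 - ebar := by exact_mod_cast hw2
    refine ⟨w, ?_⟩
    rw [postCdf_eq_zero_of_lt_sub h0 hw2']
    refine postCdf_pos hnn hpos h0 hμin h1i h1p hw1.1 (by exact_mod_cast hw1.2) ?_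
    calc (w : EReal) ≤ x2 := by exact_mod_cast (by linarith [hx2.2])
      _ ≤ xbar := hxbar2
  · rw [not_lt] at hA
    refine ⟨z1 - elow, ?_⟩
    rw [postCdf_eq_one_of_sub_le h0 h1p.ne' le_rfl]
    refine postCdf_lt_one hnn hpos h0 hμin h2i h2p
      (hxlow1.trans (by exact_mod_cast (by linarith [hx1.1] : x1 ≤ z1 - elow))) (by linarith) ?_
    calc ((z1 - elow : ℝ) : EReal) < ((z2 - ebar + (ebar - elow) : ℝ) : EReal) := by
          exact_mod_cast (by linarith)
      _ ≤ xbar := EReal.coe_add_le_of_le_of_le_sub hA hwidth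

/-- Suppose the support of the prior `μ` is an interval
`[x̲, x̄]` with `−∞ ≤ x̲ < x̄ ≤ ∞`, and the noise density `fε` is positive on
`(e̲, ē)` and zero outside `[e̲, ē]`, where `−∞ < e̲ < ē < ∞` and
`ē − e̲ ≤ x̄ − x̲`. Then for all `z1 < z2` at which both posteriors are
defined, there exists `w` with `F(w|z1) > F(w|z2)`: the posterior given the
lower signal never (even weakly) FOSDs the posterior given the higher
signal. -/
theorem stmt_10 (μ : Measure ℝ) [IsProbabilityMeasure μ]
    (fε : ℝ → ℝ) (hmeas : Measurable fε) (hnn : ∀ e, 0 ≤ fε e)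
    (hdens : (∫ e, fε e) = 1)
    (xlow xbar : EReal) (hx : xlow < xbar)
    (hμout : μ {x : ℝ | (x : EReal) < xlow ∨ xbar < (x : EReal)} = 0)
    (hμin : ∀ a b : ℝ, a < b →
      (∃ t : ℝ, a < t ∧ t < b ∧ xlow < (t : EReal) ∧ (t : EReal) < xbar) →
      0 < μ (Ioo a b))
    (elow ebar : ℝ) (he : elow < ebar)
    (hpos : ∀ e ∈ Ioo elow ebar, 0 < fε e)
    (h0 : ∀ e ∉ Icc elow ebar, fε e = 0)
    (hwidth : ((ebar - elow : ℝ) : EReal) ≤ xbar - xlow) :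
    ∀ z1 z2 : ℝ, z1 < z2 →
      Integrable (fun x => fε (z1 - x)) μ → 0 < (∫ x, fε (z1 - x) ∂μ) →
      Integrable (fun x => fε (z2 - x)) μ → 0 < (∫ x, fε (z2 - x) ∂μ) →
      ∃ w : ℝ, postCdf μ fε w z2 < postCdf μ fε w z1 :=
  stmt_10_general μ fε hnn xlow xbar hμout hμin elow ebar hpos h0 hwidth
end

section
/- Suppose f_ε = 0 on (−∞, e̲) for some e̲ > −∞, f_ε > 0 on (e̲, ē), and f_ε = 0 on (ē, ∞), where ē ∈ (e̲, ∞]; and suppose the support of μ is [x̲, ∞) for some x̲ ∈ ℝ (i.e., μ((−∞, x̲)) = 0 and μ(I) > 0 for every open interval I meeting (x̲, ∞)). Then for all z1 < z2 at which both posteriors are defined, F(z1 − e̲ | z1) = 1 > F(z1 − e̲ | z2): the posterior given the lower signal never (even weakly) first-order stochastically dominates the posterior given the higher signal. -/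
open MeasureTheory Set

/-- Suppose the noise density `fε` vanishes below `e̲ > −∞`, is
positive on `(e̲, ē)` and vanishes above `ē ∈ (e̲, ∞]`, and the support of
the prior `μ` is `[x̲, ∞)` (it gives no mass below `x̲` and positive mass to
every open interval meeting `(x̲, ∞)`). Then for all `z1 < z2` at which both
posteriors are defined, `F(z1 − e̲ | z1) = 1 > F(z1 − e̲ | z2)`: the posterior
given the lower signal never (even weakly) FOSDs the posterior given the
higher signal. -/
theorem stmt_11 (μ : Measure ℝ) [IsProbabilityMeasure μ]
    (fε : ℝ → ℝ) (hmeas : Measurable fε) (hnn : ∀ e, 0 ≤ fε e)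
    (hdens : (∫ e, fε e) = 1)
    (elow : ℝ) (ebar : EReal) (hee : (elow : EReal) < ebar)
    (h0below : ∀ e : ℝ, e < elow → fε e = 0)
    (hpos : ∀ e : ℝ, elow < e → (e : EReal) < ebar → 0 < fε e)
    (h0above : ∀ e : ℝ, ebar < (e : EReal) → fε e = 0)
    (xlow : ℝ)
    (hμbelow : μ (Iio xlow) = 0)
    (hμin : ∀ a b : ℝ, a < b → xlow < b → 0 < μ (Ioo a b)) :
    ∀ z1 z2 : ℝ, z1 < z2 →
      Integrable (fun x => fε (z1 - x)) μ → 0 < (∫ x, fε (z1 - x) ∂μ) →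
      Integrable (fun x => fε (z2 - x)) μ → 0 < (∫ x, fε (z2 - x) ∂μ) →
      postCdf μ fε (z1 - elow) z1 = 1 ∧ postCdf μ fε (z1 - elow) z2 < 1 := by
  obtain ⟨t, ht1, ht2⟩ := EReal.exists_between_coe_real hee
  have htr : elow < t := by exact_mod_cast ht1
  intro z1 z2 hz h1int h1pos h2int h2pos
  set w := z1 - elow with hwdef
  constructor
  · -- postCdf = 1
    have hzero : ∫ x in Ioi w, fε (z1 - x) ∂μ = 0 := by
      rw [setIntegral_congr_fun measurableSet_Ioi (g := fun _ => (0:ℝ))]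
      · simp
      · intro x hx
        exact h0below _ (by simp only [mem_Ioi, hwdef] at hx ⊢; linarith)
    have hsplit := intervalIntegral.integral_Iic_add_Ioi (b := w) h1int.integrableOn h1int.integrableOn
    rw [hzero, add_zero] at hsplit
    rw [postCdf, hsplit, div_self (ne_of_gt h1pos)]
  · -- postCdf < 1
    rcases le_or_gt (z2 - elow) xlow with hcase | hcase
    · -- numerator is zero
      have hnull : μ (Iic w) = 0 := by
        refine measure_mono_null (fun x hx => ?_) hμbelow
        simp only [mem_Iic, hwdef] at hx
        simp only [mem_Iio]
        linarith
      have : ∫ x in Iic w, fε (z2 - x) ∂μ = 0 := by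
        rw [Measure.restrict_eq_zero.mpr hnull, integral_zero_measure]
      rw [postCdf, this, zero_div]
      norm_num
    · -- interior interval with positive mass and positive density
      set L := max (max w xlow) (z2 - t) with hLdef
      set b := z2 - elow with hbdef
      have hLb : L < b := by
        apply max_lt (max_lt ?_ hcase) ?_ <;> simp only [hwdef, hbdef] <;> linarith
      have hfpos : ∀ x ∈ Ioo L b, 0 < fε (z2 - x) := by
        intro x hx
        obtain ⟨hxL, hxb⟩ := hx
        have h1 : elow < z2 - x := by simp only [hbdef] at hxb; linarith
        have h2 : z2 - x < t := by
          have := lt_of_le_of_lt (le_max_right _ _) hxL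
          linarith
        exact hpos _ h1 (lt_trans (by exact_mod_cast h2) ht2)
      have hμpos : 0 < μ (Ioo L b) :=
        hμin L b hLb (lt_of_le_of_lt (le_trans (le_max_right _ _) (le_max_left _ _)) hLb)
      have hIoopos : 0 < ∫ x in Ioo L b, fε (z2 - x) ∂μ := by
        rw [setIntegral_pos_iff_support_of_nonneg_ae]
        · refine lt_of_lt_of_le hμpos (measure_mono ?_)
          intro x hx
          exact ⟨ne_of_gt (hfpos x hx), hx⟩
        · exact Filter.Eventually.of_forall fun x => hnn _
        · exact h2int.integrableOn
      have hmono : (∫ x in Ioo L b, fε (z2 - x) ∂μ) ≤ ∫ x in Ioi w, fε (z2 - x) ∂μ := by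
        apply setIntegral_mono_set h2int.integrableOn
          (Filter.Eventually.of_forall fun x => hnn _)
        refine Filter.Eventually.of_forall fun x hx => ?_
        have := lt_of_le_of_lt (le_trans (le_max_left _ _) (le_max_left _ _)) hx.1
        exact this
      have hsplit := intervalIntegral.integral_Iic_add_Ioi (b := w) h2int.integrableOn h2int.integrableOn
      have hlt : (∫ x in Iic w, fε (z2 - x) ∂μ) < ∫ x, fε (z2 - x) ∂μ := by
        rw [← hsplit]
        linarith [lt_of_lt_of_le hIoopos hmono]
      rw [postCdf, div_lt_one h2pos]
      exact hlt
end

section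
/- Suppose f_ε = 0 on (ē, ∞) for some ē < ∞, f_ε > 0 on (e̲, ē), and f_ε = 0 on (−∞, e̲), where e̲ ∈ [−∞, ē); and suppose the support of μ is (−∞, x̄] for some x̄ ∈ ℝ (i.e., μ((x̄, ∞)) = 0 and μ(I) > 0 for every open interval I meeting (−∞, x̄)). Then for all z1 < z2 at which both posteriors are defined, there exists w with F(w|z1) > 0 = F(w|z2): the posterior given the lower signal never (even weakly) first-order stochastically dominates the posterior given the higher signal. -/
open MeasureTheory Set

/-- Suppose the noise density `fε` vanishes above `ē < ∞`, is
positive on `(e̲, ē)` and vanishes below `e̲ ∈ [−∞, ē)`, and the support of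
the prior `μ` is `(−∞, x̄]` (it gives no mass above `x̄` and positive mass to
every open interval meeting `(−∞, x̄)`). Then for all `z1 < z2` at which both
posteriors are defined, there exists `w` with `F(w|z1) > 0 = F(w|z2)`: the
posterior given the lower signal never (even weakly) FOSDs the posterior
given the higher signal. -/
theorem stmt_12 (μ : Measure ℝ) [IsProbabilityMeasure μ]
    (fε : ℝ → ℝ) (hmeas : Measurable fε) (hnn : ∀ e, 0 ≤ fε e)
    (hdens : (∫ e, fε e) = 1)
    (ebar : ℝ) (elow : EReal) (hee : elow < (ebar : EReal))
    (h0above : ∀ e : ℝ, ebar < e → fε e = 0)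
    (hpos : ∀ e : ℝ, elow < (e : EReal) → e < ebar → 0 < fε e)
    (h0below : ∀ e : ℝ, (e : EReal) < elow → fε e = 0)
    (xbar : ℝ)
    (hμabove : μ (Ioi xbar) = 0)
    (hμin : ∀ a b : ℝ, a < b → a < xbar → 0 < μ (Ioo a b)) :
    ∀ z1 z2 : ℝ, z1 < z2 →
      Integrable (fun x => fε (z1 - x)) μ → 0 < (∫ x, fε (z1 - x) ∂μ) →
      Integrable (fun x => fε (z2 - x)) μ → 0 < (∫ x, fε (z2 - x) ∂μ) →
      ∃ w : ℝ, postCdf μ fε w z2 = 0 ∧ 0 < postCdf μ fε w z1 := by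
  intro z1 z2 hz h1int h1pos h2int h2pos
  have key0 : ∀ (z c : ℝ), c < z - ebar → postCdf μ fε c z = 0 := by
    intro z c hc
    unfold postCdf
    have : ∫ x in Iic c, fε (z - x) ∂μ = ∫ _x in Iic c, (0:ℝ) ∂μ := by
      refine setIntegral_congr_fun measurableSet_Iic fun x hx => ?_
      exact h0above _ (by simp only [mem_Iic] at hx; linarith)
    rw [this]
    simp
  by_cases hcase : z1 - ebar < xbar
  · -- pick a real r with elow < r < ebar
    obtain ⟨m, hm1, hm2⟩ := exists_between hee
    lift m to ℝ using ⟨ne_top_of_lt hm2, fun h => by simp [h] at hm1⟩ with r hr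
    have hrb : r < ebar := by exact_mod_cast hm2
    set c := min ((z1 - ebar + (z2 - ebar))/2) (z1 - r) with hcdef
    have hc1 : z1 - ebar < c := lt_min (by linarith) (by linarith)
    have hc2 : c < z2 - ebar := lt_of_le_of_lt (min_le_left _ _) (by linarith)
    refine ⟨c, key0 z2 c hc2, ?_⟩
    unfold postCdf
    apply div_pos ?_ h1pos
    have hint' : Integrable (fun x => fε (z1 - x)) (μ.restrict (Iic c)) :=
      h1int.restrict
    have hnn' : 0 ≤ᵐ[μ.restrict (Iic c)] fun x => fε (z1 - x) :=
      Filter.Eventually.of_forall fun x => hnn _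
    rw [integral_pos_iff_support_of_nonneg_ae hnn' hint']
    have hsub : Ioo (z1 - ebar) c ⊆ Function.support fun x => fε (z1 - x) := by
      intro x hx
      have hx1 : z1 - ebar < x := hx.1
      have hx2 : x < c := hx.2
      have hxr : x < z1 - r := lt_of_lt_of_le hx2 (min_le_right _ _)
      have hpos' : 0 < fε (z1 - x) := by
        refine hpos _ ?_ (by linarith)
        calc elow < (r : EReal) := hm1
          _ ≤ ((z1 - x : ℝ) : EReal) := by exact_mod_cast (by linarith : r ≤ z1 - x)
      exact ne_of_gt hpos'
    have hmeas' : (μ.restrict (Iic c)) (Ioo (z1 - ebar) c) = μ (Ioo (z1 - ebar) c) := by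
      rw [Measure.restrict_apply measurableSet_Ioo]
      congr 1
      exact inter_eq_self_of_subset_left (fun x hx => le_of_lt hx.2)
    calc (0:ENNReal) < μ (Ioo (z1 - ebar) c) := hμin _ _ hc1 hcase
      _ = (μ.restrict (Iic c)) (Ioo (z1 - ebar) c) := hmeas'.symm
      _ ≤ (μ.restrict (Iic c)) (Function.support fun x => fε (z1 - x)) :=
          measure_mono hsub
  · push_neg at hcase
    refine ⟨xbar, key0 z2 xbar (by linarith), ?_⟩
    unfold postCdf
    apply div_pos ?_ h1pos
    have heq : ∫ x in Iic xbar, fε (z1 - x) ∂μ = ∫ x, fε (z1 - x) ∂μ := by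
      have h0 : μ.restrict (Iic xbar)ᶜ = 0 :=
        Measure.restrict_eq_zero.mpr (by simpa [compl_Iic] using hμabove)
      have hzero : ∫ x in (Iic xbar)ᶜ, fε (z1 - x) ∂μ = 0 := by
        rw [h0]; simp
      rw [← integral_add_compl measurableSet_Iic h1int, hzero, add_zero]
    rw [heq]; exact h1pos
end
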